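/- arXiv:0909.5648 — 4 statements merged into one kernel-verified Lean document; each statement's English description precedes it below -/
import Mathlib

section
/- Let p be an odd prime and let a be a positive integer. Then ∑_{k=0}^{p^a-1} binom(2k,k)/2^k ≡ (-1)^{(p^a-1)/2} (mod p²) and ∑_{k=1}^{p^a-1} binom(2k,k+1)/2^k ≡ 1 - 2^{p-1} (mod p²). -/
/-!
With `n = p ^ a = 2 y + 1`, multiplying the sums by a power of `2` and inducting on `n` turns
them into `(-1) ^ y * ∑_{s ≤ y} (-1) ^ s C(2n, 2s)` and `C(2n, n) - 2 ^ n`.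
Modulo `p²`, `C(2n, n) = ∑ C(n, i)² ≡ 2`, while `C(2n, 2s)` vanishes unless `s = i p ^ (a - 1)`,
where it is `(-1) ^ i C(p, i)`: this comes from `k C(N, k) = N C(N - 1, k - 1)` together with
`C(N - 1, k) ≡ (-1) ^ k (mod p)` for `k < p ^ c ∣ N`. So the first sum becomes
`∑_{i ≤ (p - 1) / 2} C(p, i) = 2 ^ (p - 1)`; Euler's theorem gives `2 ^ (n - 1) ≡ 2 ^ (p - 1)`,
and Fermat's, `(2 ^ (p - 1) - 1)² ≡ 0`.
-/

open Finset

section Identities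

variable {R : Type*} [CommRing R]

theorem Nat.choose_add_two_add_two (N m : ℕ) :
    (N + 2).choose (m + 2) = N.choose m + 2 * N.choose (m + 1) + N.choose (m + 2) := by
  rw [Nat.choose_succ_succ (N + 1), Nat.choose_succ_succ N, Nat.choose_succ_succ N (m + 1)]
  ring

theorem sum_neg_one_pow_mul_choose_two_mul_add_two (n : ℕ) :
    ∑ i ∈ range (n + 1), (-1 : R) ^ i * ((2 * n + 2).choose (n + 2 * i + 2) : R) =
      2 * ∑ i ∈ range n, (-1 : R) ^ i * ((2 * n).choose (n + 2 * i + 1) : R) +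
        (2 * n).choose n := by
  set g : ℕ → R := fun i ↦ (-1) ^ i * ((2 * n).choose (n + 2 * i) : R)
  -- the outer terms of the two-step Pascal rule telescope, as their signs alternate
  have telescope : ∑ i ∈ range (n + 1), (g i - g (i + 1)) = (2 * n).choose n := by
    rw [sum_range_sub']
    simp [g, Nat.choose_eq_zero_of_lt (by omega : 2 * n < n + 2 * (n + 1))]
  have extend : ∑ i ∈ range n, (-1 : R) ^ i * ((2 * n).choose (n + 2 * i + 1) : R) =
      ∑ i ∈ range (n + 1), (-1 : R) ^ i * ((2 * n).choose (n + 2 * i + 1) : R) := by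
    simp [sum_range_succ, Nat.choose_eq_zero_of_lt (by omega : 2 * n < n + 2 * n + 1)]
  rw [extend, ← telescope, mul_sum, ← sum_add_distrib]
  refine sum_congr rfl fun i _ ↦ ?_
  simp only [g, Nat.choose_add_two_add_two, pow_succ, show n + 2 * (i + 1) = n + 2 * i + 2 by ring]
  push_cast
  ring

theorem sum_centralBinom_mul_two_pow (n : ℕ) :
    ∑ k ∈ range n, ((2 * k).choose k : R) * 2 ^ (n - 1 - k) =
      ∑ i ∈ range n, (-1 : R) ^ i * ((2 * n).choose (n + 2 * i + 1) : R) := by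
  induction n with
  | zero => simp
  | succ n ih =>
    rw [sum_range_succ, Nat.add_sub_cancel, Nat.sub_self, pow_zero, mul_one,
      show 2 * (n + 1) = 2 * n + 2 by ring]
    simp only [show ∀ i, n + 1 + 2 * i + 1 = n + 2 * i + 2 by intro; ring]
    rw [sum_neg_one_pow_mul_choose_two_mul_add_two, ← ih, mul_sum]
    congr 1
    refine sum_congr rfl fun k hk ↦ ?_
    rw [show n - k = n - 1 - k + 1 by have := mem_range.mp hk; omega, pow_succ]
    ring

theorem sum_neg_one_pow_mul_choose_of_odd {n y : ℕ} (hn : n = 2 * y + 1) :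
    ∑ i ∈ range n, (-1 : R) ^ i * ((2 * n).choose (n + 2 * i + 1) : R) =
      (-1) ^ y * ∑ s ∈ range (y + 1), (-1 : R) ^ s * ((2 * n).choose (2 * s) : R) := by
  subst hn
  rw [show 2 * y + 1 = (y + 1) + y by ring, sum_range_add,
    sum_eq_zero (s := range y) fun i _ ↦ by rw [Nat.choose_eq_zero_of_lt (by omega), Nat.cast_zero,
      mul_zero], add_zero, ← sum_range_reflect, mul_sum]
  refine sum_congr rfl fun s hs ↦ ?_
  have hsy : s ≤ y := Nat.lt_succ_iff.mp (mem_range.mp hs)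
  have hsign : (-1 : R) ^ y = (-1) ^ (y - s) * (-1) ^ s := by rw [← pow_add, Nat.sub_add_cancel hsy]
  rw [show y + 1 + y + 2 * (y + 1 - 1 - s) + 1 = 2 * (y + 1 + y) - 2 * s by omega,
    Nat.choose_symm (by omega), hsign, Nat.add_sub_cancel, mul_assoc, ← mul_assoc ((-1 : R) ^ s),
    ← pow_add, ← two_mul, pow_mul, neg_one_sq, one_pow, one_mul]

theorem sum_choose_succ_mul_two_pow (n : ℕ) :
    ∑ k ∈ range n, ((2 * k).choose (k + 1) : R) * 2 ^ (n - k) = (2 * n).choose n - 2 ^ n := by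
  induction n with
  | zero => simp
  | succ n ih =>
    have pascal :
        (2 * (n + 1)).choose (n + 1) = 2 * (2 * n).choose n + 2 * (2 * n).choose (n + 1) := by
      rw [show 2 * (n + 1) = 2 * n + 1 + 1 by ring, Nat.choose_succ_succ, ← Nat.choose_symm_half,
        Nat.choose_succ_succ]
      ring
    rw [sum_range_succ, Nat.add_sub_cancel_left, pascal]
    have double : ∑ k ∈ range n, ((2 * k).choose (k + 1) : R) * 2 ^ (n + 1 - k) =
        2 * ∑ k ∈ range n, ((2 * k).choose (k + 1) : R) * 2 ^ (n - k) := by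
      rw [mul_sum]
      refine sum_congr rfl fun k hk ↦ ?_
      rw [show n + 1 - k = n - k + 1 by have := mem_range.mp hk; omega, pow_succ]
      ring
    rw [double, ih]
    push_cast
    ring

end Identities

theorem Nat.mul_choose_eq_mul_choose_pred {n k : ℕ} (hk : k ≠ 0) :
    k * n.choose k = n * (n - 1).choose (k - 1) := by
  obtain ⟨k, rfl⟩ := Nat.exists_eq_add_one_of_ne_zero hk
  rcases n with _ | n
  · simp
  · rw [Nat.add_sub_cancel, Nat.add_sub_cancel, Nat.add_one_mul_choose_eq, mul_comm]

-- In `k * C(n, k) = n * C(n - 1, k - 1)`, at most `b` of the factors `p` of `n` go to `k`.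
theorem Nat.Prime.pow_dvd_choose {p n k a b : ℕ} (hp : p.Prime) (hn : p ^ (b + a) ∣ n)
    (hk : ¬ p ^ (b + 1) ∣ k) : p ^ a ∣ n.choose k := by
  have hk0 : k ≠ 0 := by rintro rfl; exact hk (dvd_zero _)
  rcases eq_or_ne (n.choose k) 0 with hC | hC
  · rw [hC]; exact dvd_zero _
  have hkC : p ^ (b + a) ∣ k * n.choose k :=
    Nat.mul_choose_eq_mul_choose_pred hk0 ▸ hn.mul_right _
  rw [hp.pow_dvd_iff_le_factorization (mul_ne_zero hk0 hC), Nat.factorization_mul hk0 hC,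
    Finsupp.add_apply] at hkC
  rw [hp.pow_dvd_iff_le_factorization hk0] at hk
  rw [hp.pow_dvd_iff_le_factorization hC]
  omega

theorem Nat.Prime.choose_pred_eq_neg_one_pow {p c N : ℕ} (hp : p.Prime) (hN : p ^ c ∣ N)
    (hN0 : N ≠ 0) : ∀ k < p ^ c, ((N - 1).choose k : ZMod p) = (-1) ^ k := by
  intro k
  induction k with
  | zero => simp
  | succ k ih =>
    intro hk
    obtain ⟨c, rfl⟩ : ∃ c', c = c' + 1 :=
      Nat.exists_eq_add_one_of_ne_zero (by rintro rfl; simp at hk)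
    have hdvd : p ^ 1 ∣ N.choose (k + 1) :=
      hp.pow_dvd_choose hN fun h ↦ by have := Nat.le_of_dvd k.succ_pos h; omega
    have pascal := congrArg (Nat.cast : ℕ → ZMod p)
      (Nat.choose_eq_choose_pred_add (Nat.pos_of_ne_zero hN0) (Nat.succ_pos k))
    rw [(ZMod.natCast_eq_zero_iff _ _).mpr (pow_one p ▸ hdvd), Nat.cast_add, Nat.succ_sub_one,
      ih (by omega)] at pascal
    rw [pow_succ]
    linear_combination -pascal

theorem ZMod.natCast_mul_eq_of_intCast_eq {p : ℕ} {x y : ℤ} (h : (x : ZMod p) = y) :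
    (p * x : ZMod (p ^ 2)) = p * y := by
  obtain ⟨c, hc⟩ := (ZMod.intCast_eq_intCast_iff_dvd_sub _ _ _).mp h
  have : ((p * (y - x) : ℤ) : ZMod (p ^ 2)) = 0 := by
    rw [ZMod.intCast_zmod_eq_zero_iff_dvd, hc]
    exact ⟨c, by push_cast; ring⟩
  push_cast at this
  linear_combination -this

-- Multiplied by `i`, both sides become `p` times a number congruent to `-1` modulo `p`.
theorem Nat.Prime.choose_two_mul_pow_succ {p : ℕ} (hp : p.Prime) (b : ℕ) {i : ℕ}
    (hi : 2 * i < p) :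
    ((2 * p ^ (b + 1)).choose (2 * i * p ^ b) : ZMod (p ^ 2)) = (-1) ^ i * p.choose i := by
  rcases eq_or_ne i 0 with rfl | hi0
  · simp
  have hp0 := hp.pos
  have hipb : 0 < i * p ^ b := by positivity
  have hlt : 2 * i * p ^ b < p ^ (b + 1) := by
    rw [pow_succ']; exact Nat.mul_lt_mul_of_pos_right hi (by positivity)
  have hunit : IsUnit (i : ZMod (p ^ 2)) :=
    (ZMod.isUnit_iff_coprime _ _).mpr
      ((Nat.coprime_of_lt_prime hi0 (by omega) hp).symm.pow_right 2)
  have hcancel : i * (2 * p ^ (b + 1)).choose (2 * i * p ^ b) =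
      p * (2 * p ^ (b + 1) - 1).choose (2 * i * p ^ b - 1) := by
    have := Nat.mul_choose_eq_mul_choose_pred (n := 2 * p ^ (b + 1))
      (by positivity : 2 * i * p ^ b ≠ 0)
    refine Nat.eq_of_mul_eq_mul_left (by positivity : 0 < 2 * p ^ b) ?_
    linear_combination this
  have hpred : ((2 * p ^ (b + 1) - 1).choose (2 * i * p ^ b - 1) : ZMod p) = -1 := by
    rw [hp.choose_pred_eq_neg_one_pow (dvd_mul_left _ 2) (by positivity) _ (by omega), mul_assoc,
      Odd.neg_one_pow ⟨i * p ^ b - 1, by omega⟩]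
  have hpred' : ((p - 1).choose (i - 1) : ZMod p) = (-1) ^ (i - 1) :=
    hp.choose_pred_eq_neg_one_pow (pow_one p).dvd hp.ne_zero _ (by rw [pow_one]; omega)
  have hC := ZMod.natCast_mul_eq_of_intCast_eq (p := p)
    (x := (2 * p ^ (b + 1) - 1).choose (2 * i * p ^ b - 1)) (y := -1) (by exact_mod_cast hpred)
  have hC' := ZMod.natCast_mul_eq_of_intCast_eq (p := p) (x := (p - 1).choose (i - 1))
    (y := (-1) ^ (i - 1)) (by exact_mod_cast hpred')
  push_cast at hC hC'
  have hsign : (-1 : ZMod (p ^ 2)) ^ i = -(-1) ^ (i - 1) := by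
    rw [← Nat.sub_add_cancel (Nat.one_le_iff_ne_zero.mpr hi0), pow_succ, Nat.add_sub_cancel]; ring
  apply hunit.mul_left_cancel
  calc (i : ZMod (p ^ 2)) * (2 * p ^ (b + 1)).choose (2 * i * p ^ b)
      = p * (2 * p ^ (b + 1) - 1).choose (2 * i * p ^ b - 1) := by
        simpa only [Nat.cast_mul] using congrArg (Nat.cast : ℕ → ZMod (p ^ 2)) hcancel
    _ = (-1) ^ i * (p * (p - 1).choose (i - 1)) := by
        have hsq : ((-1 : ZMod (p ^ 2)) ^ (i - 1)) ^ 2 = 1 := by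
          rw [← pow_mul, pow_mul', neg_one_sq, one_pow]
        rw [hC, hC', hsign]
        linear_combination (p : ZMod (p ^ 2)) * hsq
    _ = i * ((-1) ^ i * p.choose i) := by
      rw [← Nat.cast_mul, ← Nat.mul_choose_eq_mul_choose_pred hi0]; push_cast; ring

theorem Nat.Prime.sum_neg_one_pow_mul_choose_two_mul_pow_succ {p : ℕ} (hp : p.Prime) (hp2 : p ≠ 2)
    {b y : ℕ} (hy : p ^ (b + 1) = 2 * y + 1) :
    ∑ s ∈ range (y + 1),
      (-1 : ZMod (p ^ 2)) ^ s * (2 * p ^ (b + 1)).choose (2 * s) = 2 ^ (p - 1) := by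
  obtain ⟨h, hh⟩ := hp.odd_of_ne_two hp2
  have hd : Odd (p ^ b) := (hp.odd_of_ne_two hp2).pow
  have hd0 : 0 < p ^ b := hd.pos
  have hP : p ^ (b + 1) = 2 * (h * p ^ b) + p ^ b := by rw [pow_succ', hh]; ring
  have hsub : (range (h + 1)).image (· * p ^ b) ⊆ range (y + 1) := by
    simp only [subset_iff, mem_image, mem_range]
    rintro _ ⟨i, hi, rfl⟩
    have := Nat.mul_le_mul_right (p ^ b) (Nat.lt_succ_iff.mp hi)
    omega
  have hvanish : ∀ s ∈ range (y + 1), s ∉ (range (h + 1)).image (· * p ^ b) →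
      (-1 : ZMod (p ^ 2)) ^ s * (2 * p ^ (b + 1)).choose (2 * s) = 0 := by
    intro s hs hsi
    have hds : ¬ p ^ b ∣ 2 * s := by
      rintro hdvd
      obtain ⟨i, rfl⟩ := (Nat.coprime_two_left.mpr hd).symm.dvd_of_dvd_mul_left hdvd
      refine hsi (mem_image.mpr ⟨i, mem_range.mpr ?_, mul_comm _ _⟩)
      by_contra hih
      have := Nat.mul_le_mul_right (p ^ b) (not_lt.mp hih)
      have := mem_range.mp hs
      rw [add_mul, one_mul, mul_comm (p ^ b) i] at *
      omega
    obtain ⟨c, rfl⟩ : ∃ c, b = c + 1 :=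
      Nat.exists_eq_add_one_of_ne_zero (by rintro rfl; exact hds (by simp))
    have hsq : p ^ 2 ∣ (2 * p ^ (c + 1 + 1)).choose (2 * s) :=
      hp.pow_dvd_choose (b := c) (dvd_mul_left _ _) hds
    rw [(ZMod.natCast_eq_zero_iff _ _).mpr hsq, mul_zero]
  rw [← sum_subset hsub hvanish, sum_image fun i _ j _ hij ↦ Nat.eq_of_mul_eq_mul_right hd0 hij]
  have hterm : ∀ i ∈ range (h + 1), (-1 : ZMod (p ^ 2)) ^ (i * p ^ b) *
      (2 * p ^ (b + 1)).choose (2 * (i * p ^ b)) = p.choose i := by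
    intro i hi
    rw [← mul_assoc, hp.choose_two_mul_pow_succ b (by have := mem_range.mp hi; omega), ← mul_assoc,
      mul_comm i, pow_mul, hd.neg_one_pow, ← pow_add, ← two_mul, pow_mul, neg_one_sq, one_pow,
      one_mul]
  rw [sum_congr rfl hterm, ← Nat.cast_sum, hh, Nat.sum_range_choose_halfway]
  push_cast
  rw [pow_mul]
  norm_num

theorem Nat.Prime.choose_two_mul_pow {p : ℕ} (hp : p.Prime) (a : ℕ) :
    ((2 * p ^ a).choose (p ^ a) : ZMod (p ^ 2)) = 2 := by
  have hpa : p ^ a ≠ 0 := pow_ne_zero a hp.ne_zero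
  rw [← Nat.sum_range_choose_sq, Nat.cast_sum, sum_eq_add_of_mem 0 (p ^ a)
    (mem_range.mpr (by omega)) (mem_range.mpr (by omega)) hpa.symm fun k _ hk ↦
      (ZMod.natCast_eq_zero_iff _ _).mpr (pow_dvd_pow_of_dvd (hp.dvd_choose_pow hk.1 hk.2) 2)]
  norm_num

theorem ZMod.pow_prime_pow_sub_one {p a : ℕ} (hp : p.Prime) (ha : a ≠ 0) {x : ZMod (p ^ 2)}
    (hx : IsUnit x) : x ^ (p ^ a - 1) = x ^ (p - 1) := by
  have htot : x ^ (p * (p - 1)) = 1 := by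
    have := congrArg Units.val (ZMod.pow_totient hx.unit)
    simpa [Nat.totient_prime_pow hp two_pos] using this
  obtain ⟨c, rfl⟩ := Nat.exists_eq_add_one_of_ne_zero ha
  obtain ⟨s, hs⟩ := Nat.sub_dvd_pow_sub_pow p 1 c
  have h1 : 1 ≤ p ^ c := Nat.one_le_pow _ _ hp.pos
  have h2 : p * (p ^ c - 1) = p * p ^ c - p := Nat.mul_sub_one _ _
  have h3 : p ≤ p * p ^ c := Nat.le_mul_of_pos_right _ h1
  rw [one_pow] at hs
  have hexp : p ^ (c + 1) - 1 = p - 1 + p * (p - 1) * s := by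
    rw [mul_assoc, ← hs, pow_succ', h2]
    have := hp.two_le
    omega
  rw [hexp, pow_add, pow_mul, htot, one_pow, mul_one]

theorem ZMod.pow_mul_sum_mul_inv_pow {N : ℕ} {x : ZMod N} (hx : IsUnit x) (c : ℕ → ZMod N)
    {m n : ℕ} (hnm : n ≤ m + 1) :
    x ^ m * ∑ k ∈ range n, c k * (x ^ k)⁻¹ = ∑ k ∈ range n, c k * x ^ (m - k) := by
  rw [mul_sum]
  refine sum_congr rfl fun k hk ↦ ?_
  rw [← Nat.sub_add_cancel (by have := mem_range.mp hk; omega : k ≤ m), pow_add,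
    Nat.add_sub_cancel]
  calc x ^ (m - k) * x ^ k * (c k * (x ^ k)⁻¹)
      = c k * x ^ (m - k) * (x ^ k * (x ^ k)⁻¹) := by ring
    _ = c k * x ^ (m - k) := by rw [ZMod.mul_inv_of_unit _ (hx.pow k), mul_one]

theorem ZMod.sq_pow_sub_one_sub_one_eq_zero {p : ℕ} (hp : p.Prime) {x : ℤ} (hx : IsCoprime x p) :
    ((x : ZMod (p ^ 2)) ^ (p - 1) - 1) ^ 2 = 0 := by
  have hdvd : (p : ℤ) ∣ 1 - x ^ (p - 1) := (Int.ModEq.pow_card_sub_one_eq_one hp hx).dvd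
  have := (ZMod.intCast_zmod_eq_zero_iff_dvd ((1 - x ^ (p - 1)) ^ 2) (p ^ 2)).mpr
    (by exact_mod_cast pow_dvd_pow_of_dvd hdvd 2)
  push_cast at this
  linear_combination this

theorem stmt4 (p : ℕ) (hp : p.Prime) (hp2 : p ≠ 2) (a : ℕ) (ha : 0 < a) :
    (∑ k ∈ Finset.range (p ^ a),
        (Nat.choose (2 * k) k : ZMod (p ^ 2)) * ((2 : ZMod (p ^ 2)) ^ k)⁻¹) =
      (-1 : ZMod (p ^ 2)) ^ ((p ^ a - 1) / 2) ∧
    (∑ k ∈ Finset.Ico 1 (p ^ a),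
        (Nat.choose (2 * k) (k + 1) : ZMod (p ^ 2)) * ((2 : ZMod (p ^ 2)) ^ k)⁻¹) =
      1 - (2 : ZMod (p ^ 2)) ^ (p - 1) := by
  obtain ⟨b, rfl⟩ := Nat.exists_eq_add_one_of_ne_zero ha.ne'
  have hodd : Odd p := hp.odd_of_ne_two hp2
  obtain ⟨y, hy⟩ : Odd (p ^ (b + 1)) := hodd.pow
  have h2 : IsUnit (2 : ZMod (p ^ 2)) := by
    exact_mod_cast (ZMod.isUnit_iff_coprime 2 (p ^ 2)).mpr
      ((Nat.coprime_two_left.mpr hodd).pow_right 2)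
  have hpow : (2 : ZMod (p ^ 2)) ^ (p ^ (b + 1) - 1) = 2 ^ (p - 1) :=
    ZMod.pow_prime_pow_sub_one hp b.succ_ne_zero h2
  have hfermat : ((2 : ZMod (p ^ 2)) ^ (p - 1) - 1) ^ 2 = 0 := by
    exact_mod_cast ZMod.sq_pow_sub_one_sub_one_eq_zero hp (x := 2)
      (Nat.isCoprime_iff_coprime.mpr (Nat.coprime_two_left.mpr hodd))
  constructor
  · rw [show (p ^ (b + 1) - 1) / 2 = y by omega]
    apply (h2.pow (p ^ (b + 1) - 1)).mul_left_cancel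
    rw [ZMod.pow_mul_sum_mul_inv_pow h2 _ le_tsub_add, sum_centralBinom_mul_two_pow,
      sum_neg_one_pow_mul_choose_of_odd hy, hp.sum_neg_one_pow_mul_choose_two_mul_pow_succ hp2 hy,
      hpow, mul_comm]
  · have hIco : ∑ k ∈ Ico 1 (p ^ (b + 1)), ((2 * k).choose (k + 1) : ZMod (p ^ 2)) * (2 ^ k)⁻¹ =
        ∑ k ∈ range (p ^ (b + 1)), ((2 * k).choose (k + 1) : ZMod (p ^ 2)) * (2 ^ k)⁻¹ := by
      rw [range_eq_Ico, sum_eq_sum_Ico_succ_bot (pow_pos hp.pos _ : 0 < p ^ (b + 1))]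
      simp
    have h2n : (2 : ZMod (p ^ 2)) ^ p ^ (b + 1) = 2 * 2 ^ (p - 1) := by
      rw [← hpow, ← pow_succ', Nat.sub_add_cancel (by omega)]
    apply (h2.pow (p ^ (b + 1))).mul_left_cancel
    rw [hIco, ZMod.pow_mul_sum_mul_inv_pow h2 _ (Nat.le_succ _), sum_choose_succ_mul_two_pow,
      hp.choose_two_mul_pow]
    linear_combination ((2 : ZMod (p ^ 2)) ^ (p - 1) - 2) * h2n + 2 * hfermat
end

section
/- Let p be an odd prime and let a be a positive integer. Then ∑_{k=1}^{p^a-1} binom(2k,k+1)/4^k ≡ p·δ_{a,1} - 4^{p-1} (mod p²) and ∑_{k=1}^{p^a-1} C_k/4^k ≡ 2^p - 2 (mod p²), where δ_{a,1} equals 1 if a = 1 and 0 otherwise. -/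
/-!
Multiplying by `4^N` turns both sums into ones that are evaluated by induction:
`∑_{k<n} C(2k,k) 4^(n-k) = 2n C(2n,n)` and `∑_{k<n} Cat_k 4^(n-k) + 2 C(2n,n) = 2·4^n`,
while `C(2k,k+1) = C(2k,k) - Cat_k`. For `N = p^a` everything then depends only on `C(2N,N)`,
`N` and `4^N` modulo `p²`. By Vandermonde `C(2N,N) = ∑ C(N,i)²`, whose middle terms are
divisible by `p²`, so `C(2N,N) ≡ 2`. Fermat gives `2^p = 2 + p c`, and lifting the exponent
`2^N ≡ 2^p`, so `4^N ≡ (2 + p c)²`; the rest is arithmetic modulo `p²`.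
-/

open Finset Nat

theorem sum_range_succ_mul_pow_sub {R : Type*} [CommSemiring R] (f : ℕ → R) (x : R) (n : ℕ) :
    ∑ k ∈ range (n + 1), f k * x ^ (n + 1 - k) =
      x * (∑ k ∈ range n, f k * x ^ (n - k) + f n) := by
  rw [sum_range_succ, mul_add, mul_sum, Nat.add_sub_cancel_left, pow_one, mul_comm x (f n)]
  congr 1
  refine sum_congr rfl fun k hk => ?_
  rw [Nat.sub_add_comm (mem_range.1 hk).le, pow_succ]
  ring

theorem sum_range_centralBinom_mul_four_pow (n : ℕ) :
    ∑ k ∈ range n, centralBinom k * 4 ^ (n - k) = 2 * n * centralBinom n := by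
  induction n with
  | zero => simp
  | succ n ih =>
    rw [sum_range_succ_mul_pow_sub, ih]
    linarith [succ_mul_centralBinom_succ n]

theorem sum_range_catalan_mul_four_pow (n : ℕ) :
    ∑ k ∈ range n, catalan k * 4 ^ (n - k) + 2 * centralBinom n = 2 * 4 ^ n := by
  induction n with
  | zero => simp
  | succ n ih =>
    have key : 4 * catalan n + 2 * centralBinom (n + 1) = 8 * centralBinom n := by
      apply Nat.eq_of_mul_eq_mul_left n.succ_pos
      linarith [succ_mul_catalan_eq_centralBinom n, succ_mul_centralBinom_succ n]
    rw [sum_range_succ_mul_pow_sub, pow_succ]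
    linarith

theorem choose_two_mul_succ_add_catalan (k : ℕ) :
    (2 * k).choose (k + 1) + catalan k = centralBinom k := by
  apply Nat.eq_of_mul_eq_mul_right k.add_one_pos
  have h := Nat.choose_succ_right_eq (2 * k) k
  rw [show 2 * k - k = k by omega] at h
  rw [add_mul, h, mul_comm (catalan k), succ_mul_catalan_eq_centralBinom,
    centralBinom_eq_two_mul_choose]
  ring

theorem ZMod.pow_mul_sum_Ico_mul_inv_pow {n : ℕ} {x : ZMod n} (hx : IsUnit x) (f : ℕ → ZMod n)
    {N : ℕ} (hN : 0 < N) :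
    x ^ N * ∑ k ∈ Ico 1 N, f k * (x ^ k)⁻¹ = ∑ k ∈ range N, f k * x ^ (N - k) - f 0 * x ^ N := by
  rw [range_eq_Ico, sum_eq_sum_Ico_succ_bot hN, Nat.sub_zero, mul_sum, add_sub_cancel_left]
  refine sum_congr rfl fun k hk => ?_
  calc x ^ N * (f k * (x ^ k)⁻¹)
      = f k * x ^ (N - k) * (x ^ k * (x ^ k)⁻¹) := by
        rw [← Nat.sub_add_cancel (mem_Ico.1 hk).2.le, pow_add, Nat.add_sub_cancel]
        ring
    _ = f k * x ^ (N - k) := by rw [ZMod.mul_inv_of_unit _ (hx.pow k), mul_one]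

theorem ZMod.isUnit_four {n : ℕ} (hn : Odd n) : IsUnit (4 : ZMod n) := by
  have h := (ZMod.isUnit_iff_coprime (2 ^ 2) n).2 ((Nat.coprime_two_left.2 hn).pow_left 2)
  norm_num at h
  exact h

section FourPowSums

variable {n : ℕ} (h4 : IsUnit (4 : ZMod n)) {N : ℕ} (hN : 0 < N)
include h4 hN

theorem four_pow_mul_sum_Ico_centralBinom_mul_inv_four_pow :
    (4 : ZMod n) ^ N * ∑ k ∈ Ico 1 N, (centralBinom k : ZMod n) * ((4 : ZMod n) ^ k)⁻¹ =
      2 * N * centralBinom N - 4 ^ N := by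
  have h := congrArg (Nat.cast : ℕ → ZMod n) (sum_range_centralBinom_mul_four_pow N)
  push_cast at h
  rw [ZMod.pow_mul_sum_Ico_mul_inv_pow h4 _ hN, h]
  simp

theorem four_pow_mul_sum_Ico_catalan_mul_inv_four_pow :
    (4 : ZMod n) ^ N * ∑ k ∈ Ico 1 N, (catalan k : ZMod n) * ((4 : ZMod n) ^ k)⁻¹ =
      4 ^ N - 2 * centralBinom N := by
  have h := congrArg (Nat.cast : ℕ → ZMod n) (sum_range_catalan_mul_four_pow N)
  push_cast at h
  rw [ZMod.pow_mul_sum_Ico_mul_inv_pow h4 _ hN, catalan_zero, Nat.cast_one]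
  linear_combination h

end FourPowSums

section PrimeSquare

variable {p : ℕ} [Fact p.Prime]

theorem Int.prime_dvd_pow_prime_pow_sub_self (x : ℤ) (n : ℕ) : (p : ℤ) ∣ x ^ p ^ n - x := by
  rw [← ZMod.intCast_zmod_eq_zero_iff_dvd]
  push_cast
  rw [ZMod.pow_card_pow, sub_self]

theorem Int.sq_prime_dvd_pow_prime_pow_sub_pow_prime (x : ℤ) {a : ℕ} (ha : a ≠ 0) :
    (p : ℤ) ^ 2 ∣ x ^ p ^ a - x ^ p := by
  obtain ⟨b, rfl⟩ := Nat.exists_eq_add_one_of_ne_zero ha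
  simpa [← pow_mul, pow_succ] using
    dvd_sub_pow_of_dvd_sub (Int.prime_dvd_pow_prime_pow_sub_self (p := p) x b) 1

theorem natCast_centralBinom_prime_pow (a : ℕ) :
    (centralBinom (p ^ a) : ZMod (p ^ 2)) = 2 := by
  obtain ⟨n, hn⟩ := Nat.exists_eq_add_one_of_ne_zero (pow_ne_zero a (Fact.out : p.Prime).ne_zero)
  have hmiddle : ∀ i ∈ range n, (((p ^ a).choose (i + 1) ^ 2 : ℕ) : ZMod (p ^ 2)) = 0 := by
    intro i hi
    rw [ZMod.natCast_eq_zero_iff]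
    refine pow_dvd_pow_of_dvd (Nat.Prime.dvd_choose_pow Fact.out i.succ_ne_zero ?_) 2
    have := mem_range.1 hi
    omega
  rw [centralBinom_eq_two_mul_choose, ← sum_range_choose_sq, Nat.cast_sum, hn, sum_range_succ,
    sum_range_succ', ← hn, sum_eq_zero hmiddle]
  norm_num [hn]

theorem ZMod.natCast_self_sq (n : ℕ) : (n : ZMod (n ^ 2)) ^ 2 = 0 := by
  exact_mod_cast ZMod.natCast_self (n ^ 2)

theorem ZMod.exists_two_pow_prime_eq_two_add_mul :
    ∃ c : ZMod (p ^ 2), (2 : ZMod (p ^ 2)) ^ p = 2 + (p : ZMod (p ^ 2)) * c := by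
  obtain ⟨c, hc⟩ := Int.prime_dvd_pow_prime_pow_sub_self (p := p) 2 1
  refine ⟨c, ?_⟩
  have h := congrArg (Int.cast : ℤ → ZMod (p ^ 2)) hc
  push_cast at h
  linear_combination h

theorem ZMod.two_pow_prime_pow {a : ℕ} (ha : a ≠ 0) : (2 : ZMod (p ^ 2)) ^ p ^ a = 2 ^ p := by
  have h := (ZMod.intCast_zmod_eq_zero_iff_dvd _ (p ^ 2)).2
    (by exact_mod_cast Int.sq_prime_dvd_pow_prime_pow_sub_pow_prime (p := p) 2 ha)
  push_cast at h
  exact sub_eq_zero.1 h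

theorem ZMod.four_pow_prime_pow {a : ℕ} (ha : a ≠ 0) :
    (4 : ZMod (p ^ 2)) ^ p ^ a = ((2 : ZMod (p ^ 2)) ^ p) ^ 2 := by
  rw [← ZMod.two_pow_prime_pow ha, pow_right_comm]
  norm_num

variable (hp : Odd p)
include hp

theorem ZMod.four_pow_prime_sub_one : (4 : ZMod (p ^ 2)) ^ (p - 1) = 2 ^ p - 1 := by
  have h4 := ZMod.isUnit_four (hp.pow (n := 2))
  obtain ⟨c, hc⟩ := ZMod.exists_two_pow_prime_eq_two_add_mul (p := p)
  apply h4.mul_right_cancel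
  rw [← pow_succ, Nat.sub_add_cancel (Fact.out : p.Prime).one_le,
    show (4 : ZMod (p ^ 2)) ^ p = ((2 : ZMod (p ^ 2)) ^ p) ^ 2 by rw [pow_right_comm]; norm_num, hc]
  linear_combination c ^ 2 * ZMod.natCast_self_sq p

theorem sum_Ico_catalan_mul_inv_four_pow_prime_pow {a : ℕ} (ha : a ≠ 0) :
    ∑ k ∈ Ico 1 (p ^ a), (catalan k : ZMod (p ^ 2)) * ((4 : ZMod (p ^ 2)) ^ k)⁻¹ = 2 ^ p - 2 := by
  have h4 := ZMod.isUnit_four (hp.pow (n := 2))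
  obtain ⟨c, hc⟩ := ZMod.exists_two_pow_prime_eq_two_add_mul (p := p)
  apply (h4.pow (p ^ a)).mul_left_cancel
  rw [four_pow_mul_sum_Ico_catalan_mul_inv_four_pow h4 (pow_pos (Fact.out : p.Prime).pos a),
    natCast_centralBinom_prime_pow, ZMod.four_pow_prime_pow ha, hc]
  linear_combination -(3 * c ^ 2 + p * c ^ 3) * ZMod.natCast_self_sq p

theorem sum_Ico_centralBinom_mul_inv_four_pow_prime_pow {a : ℕ} (ha : a ≠ 0) :
    ∑ k ∈ Ico 1 (p ^ a), (centralBinom k : ZMod (p ^ 2)) * ((4 : ZMod (p ^ 2)) ^ k)⁻¹ =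
      p * (if a = 1 then 1 else 0) - 1 := by
  have h4 := ZMod.isUnit_four (hp.pow (n := 2))
  obtain ⟨c, hc⟩ := ZMod.exists_two_pow_prime_eq_two_add_mul (p := p)
  apply (h4.pow (p ^ a)).mul_left_cancel
  rw [four_pow_mul_sum_Ico_centralBinom_mul_inv_four_pow h4 (pow_pos (Fact.out : p.Prime).pos a),
    natCast_centralBinom_prime_pow, ZMod.four_pow_prime_pow ha, hc]
  rcases eq_or_ne a 1 with rfl | ha1
  · simp only [if_true, pow_one, mul_one]
    linear_combination -(4 * c + p * c ^ 2) * ZMod.natCast_self_sq p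
  · obtain ⟨b, rfl⟩ : ∃ b, a = b + 2 := ⟨a - 2, by omega⟩
    rw [if_neg ha1, Nat.cast_pow, pow_add, ZMod.natCast_self_sq]
    ring

end PrimeSquare

theorem stmt5 (p : ℕ) (hp : p.Prime) (hp2 : p ≠ 2) (a : ℕ) (ha : 0 < a) :
    (∑ k ∈ Finset.Ico 1 (p ^ a),
        (Nat.choose (2 * k) (k + 1) : ZMod (p ^ 2)) * ((4 : ZMod (p ^ 2)) ^ k)⁻¹) =
      (p : ZMod (p ^ 2)) * (if a = 1 then 1 else 0) - (4 : ZMod (p ^ 2)) ^ (p - 1) ∧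
    (∑ k ∈ Finset.Ico 1 (p ^ a),
        (catalan k : ZMod (p ^ 2)) * ((4 : ZMod (p ^ 2)) ^ k)⁻¹) =
      (2 : ZMod (p ^ 2)) ^ p - 2 := by
  have := Fact.mk hp
  have hodd := hp.odd_of_ne_two hp2
  have hcat := sum_Ico_catalan_mul_inv_four_pow_prime_pow hodd ha.ne'
  refine ⟨?_, hcat⟩
  have hsplit (k : ℕ) : ((2 * k).choose (k + 1) : ZMod (p ^ 2)) = centralBinom k - catalan k := by
    rw [← choose_two_mul_succ_add_catalan k]
    push_cast
    ring
  simp_rw [hsplit, sub_mul, sum_sub_distrib,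
    sum_Ico_centralBinom_mul_inv_four_pow_prime_pow hodd ha.ne', hcat,
    ZMod.four_pow_prime_sub_one hodd]
  ring
end

section
/- Let p be a prime and let a, m be integers with a > 0 and p ∤ m. Then ∑_{k=1}^{p^a-1} binom(2k,k+1)/m^k + (m^{p-1} - 1) ≡ ((m-2)/2)·∑_{k=1}^{p^a-1} binom(2k,k)/m^k + p·δ_{p,2} (mod p²), where δ_{p,2} equals 1 if p = 2 and 0 otherwise, and the congruence between rational numbers means that the p-adic valuation of the difference of the two sides is at least 2. -/
/-!
Summing the recurrence `C(2k+2, k+1) = 2 (C(2k, k+1) + C(2k, k))` telescopes to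
`∑_{0<k<n} C(2k,k+1)/m^k = (m-2)/2 ∑_{0<k<n} C(2k,k)/m^k + C(2n,n)/(2 m^(n-1)) - 1`.
So for `n = p^a` the difference of the two sides is `X / (2 m^(n-1))` with
`X = C(2n,n) + 2 m^(n-1) (m^(p-1) - 2 - 2δ_{p,2})`, and it suffices that `2p² ∣ X`.
By Vandermonde, `C(2n,n) - 2 = ∑_{0<k<n} C(n,k)²`, and `p ∣ C(n,k)` for each such `k`.
For odd `p`, together with `m^(p^a-1) ≡ m^(p-1) (mod p²)` this gives `X ≡ 2 (m^(p-1) - 1)² ≡ 0`.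
For `p = 2` the middle term `C(2^a, 2^(a-1))` is `2 mod 4` while `4` divides all the others
(Kummer), so `C(2n,n) ≡ 6 (mod 8)`, and `m^n ≡ 1 (mod 4)` finishes.
-/

open Finset

namespace Nat

lemma choose_two_mul_add_two_succ (n : ℕ) :
    (2 * n + 2).choose (n + 1) = 2 * ((2 * n).choose (n + 1) + (2 * n).choose n) := by
  rw [choose_succ_succ' (2 * n + 1), ← choose_symm_half, choose_succ_succ' (2 * n)]
  ring

lemma choose_two_mul_self_eq_two_add_sum {n : ℕ} (hn : 1 ≤ n) :
    (2 * n).choose n = 2 + ∑ k ∈ Ico 1 n, n.choose k ^ 2 := by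
  rw [← sum_range_choose_sq, range_eq_Ico, sum_eq_sum_Ico_succ_bot (by omega),
    sum_Ico_succ_top hn]
  simp only [choose_zero_right, choose_self]
  ring

lemma pow_sub_factorization_dvd_choose_prime_pow {p a k : ℕ} (hp : p.Prime) (hk0 : k ≠ 0)
    (hk : k ≤ p ^ a) : p ^ (a - k.factorization p) ∣ (p ^ a).choose k :=
  factorization_choose_prime_pow hp hk hk0 ▸ ordProj_dvd _ _

lemma four_dvd_choose_two_pow {a k : ℕ} (hk0 : k ≠ 0) (hk : k < 2 ^ a) (hka : k ≠ 2 ^ (a - 1)) :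
    4 ∣ (2 ^ a).choose k := by
  set v := k.factorization 2
  have hvk : 2 ^ v ∣ k := ordProj_dvd k 2
  have hva : v < a := (Nat.pow_lt_pow_iff_right (by norm_num)).mp
    ((le_of_dvd (pos_of_ne_zero hk0) hvk).trans_lt hk)
  have hv : v ≠ a - 1 := by
    intro hv
    refine hka (eq_of_dvd_of_lt_two_mul hk0 (hv ▸ hvk) ?_)
    rwa [← pow_succ', succ_eq_add_one, Nat.sub_one_add_one (by omega)]
  exact (pow_dvd_pow 2 (show 2 ≤ a - v by omega)).trans
    (pow_sub_factorization_dvd_choose_prime_pow prime_two hk0 hk.le)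

lemma choose_two_pow_two_pow_pred_mod_four {a : ℕ} (ha : 0 < a) :
    (2 ^ a).choose (2 ^ (a - 1)) % 4 = 2 := by
  have hle : 2 ^ (a - 1) ≤ 2 ^ a := Nat.pow_le_pow_right (by norm_num) (by omega)
  have hv : ((2 ^ a).choose (2 ^ (a - 1))).factorization 2 = 1 := by
    rw [factorization_choose_prime_pow prime_two hle (by positivity), prime_two.factorization_pow,
      Finsupp.single_eq_same]
    omega
  have hC : (2 ^ a).choose (2 ^ (a - 1)) ≠ 0 := (choose_pos hle).ne'
  have h2 : 2 ^ 1 ∣ (2 ^ a).choose (2 ^ (a - 1)) :=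
    (prime_two.pow_dvd_iff_le_factorization hC).mpr hv.ge
  have h4 : ¬ 2 ^ 2 ∣ (2 ^ a).choose (2 ^ (a - 1)) := by
    rw [prime_two.pow_dvd_iff_le_factorization hC]; omega
  omega

end Nat

theorem sum_choose_two_mul_succ_div_pow {K : Type*} [Field K] [CharZero K] {m : K} (hm : m ≠ 0)
    {n : ℕ} (hn : 1 ≤ n) :
    ∑ k ∈ Ico 1 n, ((2 * k).choose (k + 1) : K) / m ^ k =
      (m - 2) / 2 * ∑ k ∈ Ico 1 n, ((2 * k).choose k : K) / m ^ k
        + ((2 * n).choose n : K) / (2 * m ^ (n - 1)) - 1 := by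
  induction n, hn using Nat.le_induction with
  | base => norm_num
  | succ n hn ih =>
    rw [sum_Ico_succ_top hn, sum_Ico_succ_top hn, ih, mul_add, Nat.add_sub_cancel,
      mul_add_one 2 n, Nat.choose_two_mul_add_two_succ]
    have hpow : m ^ n = m ^ (n - 1) * m := by rw [← pow_succ, Nat.sub_one_add_one (by omega)]
    rw [hpow]
    push_cast
    field_simp
    ring

lemma sq_dvd_choose_two_mul_prime_pow_sub_two {p : ℕ} (hp : p.Prime) (a : ℕ) :
    (p : ℤ) ^ 2 ∣ (2 * p ^ a).choose (p ^ a) - 2 := by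
  rw [Nat.choose_two_mul_self_eq_two_add_sum (Nat.one_le_pow _ _ hp.pos)]
  push_cast
  rw [add_sub_cancel_left]
  refine dvd_sum fun k hk => pow_dvd_pow_of_dvd ?_ 2
  rw [mem_Ico] at hk
  exact Int.natCast_dvd_natCast.mpr (hp.dvd_choose_pow (by omega) (by omega))

lemma eight_dvd_choose_two_mul_two_pow_sub_six {a : ℕ} (ha : 0 < a) :
    (8 : ℤ) ∣ (2 * 2 ^ a).choose (2 ^ a) - 6 := by
  have hmid : 2 ^ (a - 1) ∈ Ico 1 (2 ^ a) :=
    mem_Ico.mpr ⟨Nat.one_le_two_pow, Nat.pow_lt_pow_right one_lt_two (by omega)⟩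
  rw [Nat.choose_two_mul_self_eq_two_add_sum Nat.one_le_two_pow, ← add_sum_erase _ _ hmid]
  push_cast
  have hsq : (8 : ℤ) ∣ ((2 ^ a).choose (2 ^ (a - 1)) : ℤ) ^ 2 - 4 := by
    obtain ⟨q, hq⟩ : ∃ q, (2 ^ a).choose (2 ^ (a - 1)) = 4 * q + 2 :=
      ⟨_, (Nat.div_add_mod _ 4).symm.trans (by rw [Nat.choose_two_pow_two_pow_pred_mod_four ha])⟩
    exact ⟨2 * q ^ 2 + 2 * q, by rw [hq]; push_cast; ring⟩
  have hrest :
      (8 : ℤ) ∣ ∑ k ∈ (Ico 1 (2 ^ a)).erase (2 ^ (a - 1)), ((2 ^ a).choose k : ℤ) ^ 2 := by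
    refine dvd_sum fun k hk => ?_
    obtain ⟨hka, hk⟩ := mem_erase.mp hk
    obtain ⟨hk1, hk2⟩ := mem_Ico.mp hk
    obtain ⟨c, hc⟩ := Nat.four_dvd_choose_two_pow (by omega) hk2 hka
    exact ⟨2 * c ^ 2, by rw [hc]; push_cast; ring⟩
  rw [show ∀ x s : ℤ, 2 + (x + s) - 6 = (x - 4) + s by intros; ring]
  exact dvd_add hsq hrest

lemma dvd_pow_sub_one_sub_one {p : ℕ} (hp : p.Prime) {m : ℤ} (hm : ¬ (p : ℤ) ∣ m) :
    (p : ℤ) ∣ m ^ (p - 1) - 1 :=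
  (Int.ModEq.pow_card_sub_one_eq_one hp
    ((Nat.prime_iff_prime_int.mp hp).irreducible.coprime_iff_not_dvd.mpr hm).symm).symm.dvd

lemma sq_dvd_pow_prime_pow_sub_one_sub_pow {p : ℕ} (hp : p.Prime) {a : ℕ} (ha : 0 < a) {m : ℤ}
    (hm : ¬ (p : ℤ) ∣ m) : (p : ℤ) ^ 2 ∣ m ^ (p ^ a - 1) - m ^ (p - 1) := by
  have hlift : (p : ℤ) ^ 2 ∣ (m ^ (p - 1)) ^ p - 1 := by
    simpa using dvd_sub_pow_of_dvd_sub (dvd_pow_sub_one_sub_one hp hm) 1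
  obtain ⟨j, hj⟩ := Nat.sub_one_dvd_pow_sub_one p (a - 1)
  have hexp : p ^ a - 1 = (p - 1) + (p - 1) * p * j := by
    obtain ⟨q, rfl⟩ : ∃ q, p = q + 1 := ⟨p - 1, (Nat.sub_one_add_one hp.ne_zero).symm⟩
    rw [Nat.add_sub_cancel] at hj
    have hpow : (q + 1) ^ a = (q + 1) * (q * j + 1) := by
      rw [← Nat.sub_one_add_one ha.ne', pow_succ', ← hj,
        Nat.sub_add_cancel (Nat.one_le_pow _ _ (Nat.succ_pos q))]
    rw [hpow, Nat.add_sub_cancel, show (q + 1) * (q * j + 1) = q + q * (q + 1) * j + 1 by ring,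
      Nat.add_sub_cancel]
  rw [hexp, pow_add, pow_mul, pow_mul, ← mul_sub_one]
  exact (hlift.trans (sub_one_dvd_pow_sub_one _ j)).mul_left _

lemma two_mul_sq_dvd_of_odd_prime {p : ℕ} (hp : p.Prime) (hp2 : p ≠ 2) {a : ℕ} (ha : 0 < a)
    {m : ℤ} (hm : ¬ (p : ℤ) ∣ m) :
    2 * (p : ℤ) ^ 2 ∣ (2 * p ^ a).choose (p ^ a) + 2 * m ^ (p ^ a - 1) * (m ^ (p - 1) - 2) := by
  have hcop : IsCoprime (2 : ℤ) ((p : ℤ) ^ 2) := by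
    refine ((Nat.prime_iff_prime_int.mp hp).irreducible.coprime_iff_not_dvd.mpr ?_).symm.pow_right
    exact_mod_cast fun h => hp2 ((Nat.prime_dvd_prime_iff_eq hp Nat.prime_two).mp h)
  refine hcop.mul_dvd (dvd_add ?_ (dvd_mul_of_dvd_left (dvd_mul_right 2 _) _)) ?_
  · rw [← Nat.centralBinom_eq_two_mul_choose]
    exact_mod_cast Nat.two_dvd_centralBinom_of_one_le (Nat.one_le_pow _ _ hp.pos)
  · rw [show ∀ c u v : ℤ,
        c + 2 * u * (v - 2) = (c - 2) + 2 * (u - v) * (v - 2) + 2 * (v - 1) ^ 2 by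
      intros; ring]
    refine dvd_add (dvd_add (sq_dvd_choose_two_mul_prime_pow_sub_two hp a) ?_) ?_
    · exact ((sq_dvd_pow_prime_pow_sub_one_sub_pow hp ha hm).mul_left 2).mul_right _
    · exact (pow_dvd_pow_of_dvd (dvd_pow_sub_one_sub_one hp hm) 2).mul_left 2

lemma eight_dvd_choose_two_mul_two_pow_add {a : ℕ} (ha : 0 < a) {m : ℤ} (hm : Odd m) :
    (8 : ℤ) ∣ (2 * 2 ^ a).choose (2 ^ a) + 2 * m ^ (2 ^ a - 1) * (m - 4) := by
  have h4 : (4 : ℤ) ∣ m ^ 2 ^ a - 1 := by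
    obtain ⟨t, rfl⟩ := hm
    rw [← Nat.sub_one_add_one ha.ne', pow_succ', pow_mul]
    exact (show (4 : ℤ) ∣ (2 * t + 1) ^ 2 - 1 from ⟨t ^ 2 + t, by ring⟩).trans
      (sub_one_dvd_pow_sub_one _ _)
  have hpow : m ^ 2 ^ a = m ^ (2 ^ a - 1) * m := by
    rw [← pow_succ, Nat.sub_one_add_one (by positivity)]
  rw [show ∀ c u : ℤ, c + 2 * u * (m - 4) = (c - 6) + 2 * (u * m - 1) + 8 * (1 - u) by
    intros; ring, ← hpow]
  exact dvd_add (dvd_add (eight_dvd_choose_two_mul_two_pow_sub_six ha)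
    (by simpa using mul_dvd_mul_left 2 h4)) (dvd_mul_right 8 _)

lemma two_mul_sq_dvd_choose_two_mul_prime_pow_add {p : ℕ} (hp : p.Prime) {a : ℕ} (ha : 0 < a)
    {m : ℤ} (hm : ¬ (p : ℤ) ∣ m) :
    2 * (p : ℤ) ^ 2 ∣ (2 * p ^ a).choose (p ^ a)
      + 2 * m ^ (p ^ a - 1) * (m ^ (p - 1) - 2 - if p = 2 then 2 else 0) := by
  by_cases hp2 : p = 2
  · subst hp2
    rw [show m ^ (2 - 1) - 2 - (if 2 = 2 then 2 else 0) = m - 4 by norm_num [sub_sub]]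
    exact_mod_cast eight_dvd_choose_two_mul_two_pow_add ha
      (Int.not_even_iff_odd.mp fun h => hm (by simpa using h.two_dvd))
  · simpa [hp2] using two_mul_sq_dvd_of_odd_prime hp hp2 ha hm

lemma le_padicValRat_div_of_pow_dvd {p : ℕ} [Fact p.Prime] {x u : ℤ} {e : ℕ} (hx : x ≠ 0)
    (hxe : (p : ℤ) ^ e ∣ x) (hu : ¬ (p : ℤ) ∣ u) : (e : ℤ) ≤ padicValRat p (x / u) := by
  have hu0 : u ≠ 0 := by rintro rfl; exact hu (dvd_zero _)
  rw [padicValRat.div (Int.cast_ne_zero.mpr hx) (Int.cast_ne_zero.mpr hu0), padicValRat.of_int,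
    padicValRat.of_int, padicValInt.eq_zero_of_not_dvd hu, Nat.cast_zero, sub_zero]
  exact_mod_cast ((padicValInt_dvd_iff e x).mp hxe).resolve_left hx

theorem stmt15 (p : ℕ) (hp : p.Prime) (a : ℕ) (ha : 0 < a)
    (m : ℤ) (hm : ¬ (p : ℤ) ∣ m)
    (L R : ℚ)
    (hL : L = (∑ k ∈ Finset.Ico 1 (p ^ a),
        (Nat.choose (2 * k) (k + 1) : ℚ) / (m : ℚ) ^ k) + ((m : ℚ) ^ (p - 1) - 1))
    (hR : R = ((m : ℚ) - 2) / 2 *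
        (∑ k ∈ Finset.Ico 1 (p ^ a), (Nat.choose (2 * k) k : ℚ) / (m : ℚ) ^ k) +
        (p : ℚ) * (if p = 2 then 1 else 0)) :
    L = R ∨ 2 ≤ padicValRat p (L - R) := by
  have := Fact.mk hp
  have hm0 : (m : ℚ) ≠ 0 := Int.cast_ne_zero.mpr fun h => hm (h ▸ dvd_zero _)
  obtain ⟨x, hx⟩ := two_mul_sq_dvd_choose_two_mul_prime_pow_add hp ha hm
  have hLR : L - R = ((p : ℤ) ^ 2 * x : ℤ) / (m ^ (p ^ a - 1) : ℤ) := by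
    have hc : (p : ℚ) * (if p = 2 then 1 else 0) = ((if p = 2 then 2 else 0 : ℤ) : ℚ) := by
      split_ifs with h <;> simp [h]
    have hxQ := congrArg (Int.cast : ℤ → ℚ) hx
    push_cast at hxQ
    rw [hL, hR, sum_choose_two_mul_succ_div_pow hm0 (Nat.one_le_pow _ _ hp.pos), hc]
    push_cast
    field_simp
    linear_combination hxQ
  by_cases hx0 : x = 0
  · left
    rw [← sub_eq_zero, hLR, hx0]
    simp
  · right
    rw [hLR]
    exact le_padicValRat_div_of_pow_dvd
      (mul_ne_zero (pow_ne_zero _ (by exact_mod_cast hp.ne_zero)) hx0) (dvd_mul_right _ _)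
      fun h => hm (Int.Prime.dvd_pow' hp h)
end

section
/- Let p be a prime, let a be a positive integer, and let A, B be integers, with Δ = A² - 4B. Then v_{p^a}(A,B) ≡ v_{p^{a-1}}(A,B) (mod p^a). If moreover p is odd, then u_{p^a}(A,B) ≡ (Δ/p)·u_{p^{a-1}}(A,B) (mod p^a), where (Δ/p) is the Legendre symbol. -/
/-!
Let `ω, ω̄` be the two roots of `X² - A X + B` in `QuadraticAlgebra ℤ (-B) A`, so that
`v_n = ωⁿ + ω̄ⁿ` and `(ω - ω̄) u_n = ωⁿ - ω̄ⁿ`.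

For `v`, the identity `v_{mn}(A, B) = v_n(v_m, Bᵐ)` says that `(v_{pᵃ}, B^{pᵃ})` is obtained by
iterating `(s, q) ↦ (v_p(s, q), qᵖ)`. Since the universal polynomial `v_p(X, Y)` is `Xᵖ` modulo `p`,
this map turns a congruence modulo `pʲ` into one modulo `pʲ⁺¹`; starting from
`(v_p, Bᵖ) ≡ (A, B) (mod p)` gives the claim.

For `u` with `p` odd, the Frobenius modulo `p` gives `2 ωᵖ ≡ A + Δ^((p-1)/2) (ω - ω̄)`, and
`Δ^((p-1)/2) ≡ (Δ/p)` by Euler's criterion. Hence `ωᵖ` is congruent to `ω`, to `ω̄`, or (when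
`p ∣ Δ`) to `ω̄ᵖ`, and raising these congruences to the power `pᵃ` shows that `p^(a+1)` divides
`(ω - ω̄) (u_{p^(a+1)} - (Δ/p) u_{pᵃ})`, whose `ω`-coordinate is `2 (u_{p^(a+1)} - (Δ/p) u_{pᵃ})`.
-/

/-- The Lucas sequence `u_n(A,B)` with `u_0 = 0`, `u_1 = 1`,
`u_{n+1} = A u_n - B u_{n-1}`. -/
def lucasU (A B : ℤ) : ℕ → ℤ
  | 0 => 0
  | 1 => 1
  | n + 2 => A * lucasU A B (n + 1) - B * lucasU A B n

/-- The Lucas sequence `v_n(A,B)` with `v_0 = 2`, `v_1 = A`,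
`v_{n+1} = A v_n - B v_{n-1}`. -/
def lucasV (A B : ℤ) : ℕ → ℤ
  | 0 => 2
  | 1 => A
  | n + 2 => A * lucasV A B (n + 1) - B * lucasV A B n

open QuadraticAlgebra

theorem Int.ModEq.pow_lift {n j : ℕ} (hj : j ≠ 0) {a b : ℤ} (h : a ≡ b [ZMOD n ^ j]) :
    a ^ n ≡ b ^ n [ZMOD n ^ (j + 1)] := by
  rw [Int.modEq_iff_dvd] at h ⊢
  rw [← geom_sum₂_mul, pow_succ']
  exact mul_dvd_mul (dvd_geom_sum₂_self ((dvd_pow_self _ hj).trans h)) h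

theorem MvPolynomial.eval_modEq {σ : Type*} (F : MvPolynomial σ ℤ) {n : ℤ} {x y : σ → ℤ}
    (h : ∀ i, x i ≡ y i [ZMOD n]) : F.eval x ≡ F.eval y [ZMOD n] := by
  induction F using MvPolynomial.induction_on with
  | C c => simp [Int.ModEq.refl]
  | add f g hf hg => simpa using hf.add hg
  | mul_X f i hf => simpa using hf.mul (h i)

theorem Odd.natCast_dvd_of_dvd_two_mul {S : Type*} [CommRing S] {m : ℕ} (hm : Odd m) {x : S}
    (h : (m : S) ∣ 2 * x) : (m : S) ∣ x := by
  obtain ⟨k, rfl⟩ := hm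
  have hx : x = (k + 1) * (2 * x) - ((2 * k + 1 : ℕ) : S) * x := by push_cast; ring
  rw [hx]
  exact dvd_sub (h.mul_left _) (dvd_mul_right _ _)

theorem two_mul_pow_expChar {S : Type*} [CommRing S] {p k : ℕ} [ExpChar S p]
    (hk : p = 2 * k + 1) {x y : S} (h : (x + y) ^ p = x + y) :
    2 * x ^ p = x + y + ((x - y) ^ 2) ^ k * (x - y) := by
  have h2 : (2 : S) ^ p = 2 := by rw [← one_add_one_eq_two, add_pow_expChar, one_pow]
  calc 2 * x ^ p = ((x + y) + (x - y)) ^ p := by rw [← h2, ← mul_pow]; ring_nf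
    _ = x + y + ((x - y) ^ 2) ^ k * (x - y) := by
      rw [add_pow_expChar, h, hk, pow_succ, pow_mul]

namespace QuadraticAlgebra

variable {R : Type*} [CommRing R]

theorem omega_add_star_omega (A B : R) :
    (ω + star ω : QuadraticAlgebra R (-B) A) = algebraMap R _ A := by
  rw [← algebraMap_trace_eq_add_star, trace_omega]

theorem omega_mul_star_omega (A B : R) :
    (ω * star ω : QuadraticAlgebra R (-B) A) = algebraMap R _ B := by
  rw [← algebraMap_norm_eq_mul_star, norm_def]
  simp

theorem dvd_two_mul_of_dvd_omega_sub_star_mul {a b m n : ℤ}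
    (h : (m : QuadraticAlgebra ℤ a b) ∣ (ω - star ω) * (n : QuadraticAlgebra ℤ a b)) :
    m ∣ 2 * n := by
  have h' := (algebraMap_dvd_iff (r := m)).1 (by simpa using h)
  simpa using h'.2

end QuadraticAlgebra

namespace LucasSequence

variable {R S : Type*} [CommRing R] [CommRing S]

/-- `lucasV` over an arbitrary commutative ring, so that it can be reduced modulo `p` and
evaluated at the universal pair `X 0, X 1`. -/
def v (A B : R) : ℕ → R
  | 0 => 2
  | 1 => A
  | n + 2 => A * v A B (n + 1) - B * v A B n

theorem _root_.lucasV_eq_v (A B : ℤ) : lucasV A B = v A B := by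
  funext n
  induction n using Nat.twoStepInduction with
  | zero => rfl
  | one => rfl
  | more n ih₁ ih₂ => rw [lucasV, v, ih₁, ih₂]

theorem map_v (f : R →+* S) (A B : R) (n : ℕ) : f (v A B n) = v (f A) (f B) n := by
  induction n using Nat.twoStepInduction with
  | zero => exact map_ofNat f 2
  | one => rfl
  | more n ih₁ ih₂ => simp [v, ih₁, ih₂]

theorem v_add_mul (x y : R) (n : ℕ) : v (x + y) (x * y) n = x ^ n + y ^ n := by
  induction n using Nat.twoStepInduction with
  | zero => norm_num [v]
  | one => simp [v]
  | more n ih₁ ih₂ => rw [v, ih₁, ih₂]; ring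

theorem algebraMap_v (A B : R) (n : ℕ) :
    algebraMap R (QuadraticAlgebra R (-B) A) (v A B n) = ω ^ n + star ω ^ n := by
  rw [map_v, ← omega_add_star_omega, ← omega_mul_star_omega, v_add_mul]

theorem v_mul (A B : R) (m n : ℕ) : v A B (m * n) = v (v A B m) (B ^ m) n := by
  apply algebraMap_injective (a := -B) (b := A)
  rw [algebraMap_v, map_v, algebraMap_v, map_pow, ← omega_mul_star_omega, mul_pow, v_add_mul,
    pow_mul, pow_mul]

theorem v_char (p : ℕ) [Fact p.Prime] [CharP R p] (A B : R) : v A B p = A ^ p := by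
  have : CharP (QuadraticAlgebra R (-B) A) p :=
    charP_of_injective_algebraMap algebraMap_injective p
  apply algebraMap_injective (a := -B) (b := A)
  rw [algebraMap_v, map_pow, ← omega_add_star_omega, add_pow_char]

variable (p : ℕ) [Fact p.Prime]

open MvPolynomial in
theorem exists_v_prime_eq : ∃ G : MvPolynomial (Fin 2) ℤ,
    v (X 0) (X 1) p = X 0 ^ p + C (p : ℤ) * G := by
  have : C (p : ℤ) ∣ v (X 0 : MvPolynomial (Fin 2) ℤ) (X 1) p - X 0 ^ p := by
    rw [C_dvd_iff_map_hom_eq_zero (Int.castRingHom (ZMod p)) _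
      (fun r => ZMod.intCast_zmod_eq_zero_iff_dvd r p), map_sub, map_v, map_pow, map_X, map_X,
      v_char, sub_self]
  obtain ⟨G, hG⟩ := this
  exact ⟨G, by rw [← hG]; ring⟩

theorem v_prime_modEq_self (s q : ℤ) : v s q p ≡ s [ZMOD p] := by
  have h := map_v (Int.castRingHom (ZMod p)) s q p
  rw [v_char (R := ZMod p), ZMod.pow_card] at h
  simpa [← ZMod.intCast_eq_intCast_iff] using h

theorem v_prime_modEq {j : ℕ} (hj : j ≠ 0) {s₁ s₂ q₁ q₂ : ℤ} (hs : s₁ ≡ s₂ [ZMOD p ^ j])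
    (hq : q₁ ≡ q₂ [ZMOD p ^ j]) : v s₁ q₁ p ≡ v s₂ q₂ p [ZMOD p ^ (j + 1)] := by
  obtain ⟨G, hG⟩ := exists_v_prime_eq p
  have hv (s q : ℤ) : v s q p = s ^ p + p * G.eval ![s, q] := by
    have h := congrArg (MvPolynomial.eval ![s, q]) hG
    rw [map_v] at h
    simpa using h
  have heval : G.eval ![s₁, q₁] ≡ G.eval ![s₂, q₂] [ZMOD p ^ j] :=
    G.eval_modEq (Fin.forall_fin_two.2 ⟨hs, hq⟩)
  rw [hv, hv]
  refine (hs.pow_lift hj).add ?_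
  rw [pow_succ']
  exact heval.mul_left'

theorem v_prime_pow_succ_modEq (A B : ℤ) (a : ℕ) :
    v A B (p ^ (a + 1)) ≡ v A B (p ^ a) [ZMOD p ^ (a + 1)] ∧
      B ^ p ^ (a + 1) ≡ B ^ p ^ a [ZMOD p ^ (a + 1)] := by
  induction a with
  | zero =>
    simpa [v] using ⟨v_prime_modEq_self p A B, Int.ModEq.pow_prime_eq_self Fact.out B⟩
  | succ a ih =>
    have hv := v_prime_modEq p a.succ_ne_zero ih.1 ih.2
    have hB := ih.2.pow_lift a.succ_ne_zero
    rw [← v_mul, ← v_mul, ← pow_succ, ← pow_succ] at hv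
    rw [← pow_mul, ← pow_mul, ← pow_succ, ← pow_succ] at hB
    exact ⟨hv, hB⟩

end LucasSequence

theorem sub_mul_lucasU {S : Type*} [CommRing S] {A B : ℤ} {x y : S} (hA : x + y = A)
    (hB : x * y = B) (n : ℕ) : (x - y) * lucasU A B n = x ^ n - y ^ n := by
  induction n using Nat.twoStepInduction with
  | zero => simp [lucasU]
  | one => simp [lucasU]
  | more n ih₁ ih₂ =>
    rw [lucasU, Int.cast_sub, Int.cast_mul, Int.cast_mul, ← hA, ← hB]
    linear_combination (x + y) * ih₂ - x * y * ih₁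

section

variable {p : ℕ} [hp : Fact p.Prime] {S : Type*} [CommRing S] {A B : ℤ} {x y : S}

theorem dvd_two_mul_pow_sub (hp2 : p ≠ 2) (hA : x + y = A) (hB : x * y = B) :
    (p : S) ∣ 2 * x ^ p - (A + legendreSym p (A ^ 2 - 4 * B) * (x - y)) := by
  by_cases hu : IsUnit (p : S)
  · exact hu.dvd
  obtain ⟨k, hk⟩ := hp.out.odd_of_ne_two hp2
  have := CharP.quotient S p hu
  set π := Ideal.Quotient.mk (Ideal.span {(p : S)})
  have hχ (n : ℤ) : ZMod.castHom (dvd_refl p) _ n = π n := by simp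
  have hsum : π x + π y = π A := by rw [← map_add, hA]
  have hpow : (π x + π y) ^ p = π x + π y := by rw [hsum, ← hχ, ← map_pow, ZMod.pow_card]
  have hsq : (x - y) ^ 2 = ((A ^ 2 - 4 * B : ℤ) : S) := by
    push_cast
    linear_combination (x + y + A) * hA - 4 * hB
  have hΔ : ((π x - π y) ^ 2) ^ k = π (legendreSym p (A ^ 2 - 4 * B)) := by
    rw [← map_sub, ← map_pow, hsq, ← hχ, ← hχ, ← map_pow, legendreSym.eq_pow,
      show p / 2 = k by omega]
  rw [← Ideal.mem_span_singleton, ← Ideal.Quotient.eq_zero_iff_mem, map_sub, map_mul, map_pow,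
    map_ofNat, two_mul_pow_expChar hk hpow, hΔ, hsum, map_add, map_mul, map_sub, sub_self]

/-- Modulo `p`, the Frobenius fixes both roots, swaps them, or (when `p ∣ Δ`) identifies their
`p`-th powers, according to the value of the Legendre symbol. -/
theorem exists_pow_prime_congr (hp2 : p ≠ 2) (hA : x + y = A) (hB : x * y = B) :
    ∃ γ₁ γ₂ : S, (p : S) ∣ x ^ p - γ₁ ∧ (p : S) ∣ y ^ p - γ₂ ∧
      ∀ m : ℕ, γ₁ ^ m - γ₂ ^ m = legendreSym p (A ^ 2 - 4 * B) * (x ^ m - y ^ m) := by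
  have hodd := hp.out.odd_of_ne_two hp2
  have hx := dvd_two_mul_pow_sub hp2 hA hB
  have hy := dvd_two_mul_pow_sub hp2 ((add_comm y x).trans hA) ((mul_comm y x).trans hB)
  obtain hε | hε | hε : legendreSym p (A ^ 2 - 4 * B) = 0 ∨
      legendreSym p (A ^ 2 - 4 * B) = 1 ∨ legendreSym p (A ^ 2 - 4 * B) = -1 := by
    by_cases h : ((A ^ 2 - 4 * B : ℤ) : ZMod p) = 0
    · exact Or.inl ((legendreSym.eq_zero_iff p _).2 h)
    · exact Or.inr (legendreSym.eq_one_or_neg_one p h)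
  all_goals rw [hε] at hx hy ⊢; push_cast at hx hy ⊢
  · refine ⟨y ^ p, y ^ p, hodd.natCast_dvd_of_dvd_two_mul ?_, by simp, fun m => by simp⟩
    convert dvd_sub hx hy using 1
    ring
  · refine ⟨x, y, hodd.natCast_dvd_of_dvd_two_mul ?_, hodd.natCast_dvd_of_dvd_two_mul ?_,
      fun m => by simp⟩
    · convert hx using 1; rw [← hA]; ring
    · convert hy using 1; rw [← hA]; ring
  · refine ⟨y, x, hodd.natCast_dvd_of_dvd_two_mul ?_, hodd.natCast_dvd_of_dvd_two_mul ?_,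
      fun m => by ring⟩
    · convert hx using 1; rw [← hA]; ring
    · convert hy using 1; rw [← hA]; ring

theorem dvd_sub_mul_lucasU_sub (hp2 : p ≠ 2) (hA : x + y = A) (hB : x * y = B) (a : ℕ) :
    (p : S) ^ (a + 1) ∣ (x - y) *
      (lucasU A B (p ^ (a + 1)) - legendreSym p (A ^ 2 - 4 * B) * lucasU A B (p ^ a) : ℤ) := by
  obtain ⟨γ₁, γ₂, h₁, h₂, hγ⟩ := exists_pow_prime_congr hp2 hA hB
  have h := dvd_sub (dvd_sub_pow_of_dvd_sub h₁ a) (dvd_sub_pow_of_dvd_sub h₂ a)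
  rw [sub_sub_sub_comm, hγ, ← pow_mul, ← pow_mul, ← pow_succ', ← sub_mul_lucasU hA hB,
    ← sub_mul_lucasU hA hB] at h
  convert h using 1
  push_cast
  ring

end

theorem stmt17 (p : ℕ) (hp : p.Prime) (a : ℕ) (ha : 0 < a) (A B : ℤ)
    (Δ : ℤ) (hΔ : Δ = A ^ 2 - 4 * B) :
    lucasV A B (p ^ a) ≡ lucasV A B (p ^ (a - 1)) [ZMOD (p : ℤ) ^ a] ∧
    (p ≠ 2 →
      lucasU A B (p ^ a) ≡ jacobiSym Δ p * lucasU A B (p ^ (a - 1)) [ZMOD (p : ℤ) ^ a]) := by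
  have := Fact.mk hp
  obtain ⟨b, rfl⟩ : ∃ b, a = b + 1 := ⟨a - 1, by omega⟩
  rw [Nat.add_sub_cancel]
  refine ⟨?_, fun hp2 => ?_⟩
  · rw [lucasV_eq_v]
    exact (LucasSequence.v_prime_pow_succ_modEq p A B b).1
  · rw [hΔ, ← jacobiSym.legendreSym.to_jacobiSym]
    have h := dvd_sub_mul_lucasU_sub hp2 (by simpa using omega_add_star_omega A B)
      (by simpa using omega_mul_star_omega A B) b
    rw [← Nat.cast_pow, ← Int.cast_natCast] at h
    have h2 := (hp.odd_of_ne_two hp2).pow.natCast_dvd_of_dvd_two_mul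
      (dvd_two_mul_of_dvd_omega_sub_star_mul h)
    push_cast at h2
    exact (Int.modEq_iff_dvd.2 h2).symm
end
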